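/- arXiv:2009.01043 — 2 statements merged into one kernel-verified Lean document; each statement's English description precedes it below -/
import Mathlib

section
/- (Kernel characterization.) Let H = Id − σ̂_A and Y = ker(I_Ã) ∩ Ã^{-1}(W). Then f ∈ ker(I_A) if and only if f = Hf + Dw for some w ∈ Y. Moreover ker(I_A) decomposes as the internal direct sum ker(I_A) = Im(H) ⊕ D(Y) = ker(λ_r ∘ A) ⊕ D(Y) of subspaces of X. -/
/-- Kernel characterization. Abstract setting: `X, F, Z` real vector spaces,
`λr : X → F` linear, `W ⊆ X` with `X = ker λr ⊕ W`, `σr` the projection onto `W` along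
`ker λr`, `J : F → Z` linear, `A, Ã : X → X` linear bijections, `I_A = J ∘ λr ∘ A`,
`σ̂_A = A⁻¹ ∘ σr ∘ A`, `D = A⁻¹ ∘ Ã`, `H = Id − σ̂_A`,
`Y = ker I_Ã ∩ Ã⁻¹(W)`. Then `f ∈ ker I_A ↔ f = H f + D w` for some `w ∈ Y`, and
`ker I_A = Im H ⊕ D(Y) = ker (λr ∘ A) ⊕ D(Y)`. -/
theorem kernel_characterization
    {X F Z : Type*} [AddCommGroup X] [Module ℝ X] [AddCommGroup F] [Module ℝ F]
    [AddCommGroup Z] [Module ℝ Z]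
    (lr : X →ₗ[ℝ] F) (W : Submodule ℝ X)
    (hW : IsCompl (LinearMap.ker lr) W)
    (σr : X →ₗ[ℝ] X)
    (hσ_mem : ∀ x : X, σr x ∈ W)
    (hσ_ker : ∀ x : X, x - σr x ∈ LinearMap.ker lr)
    (J : F →ₗ[ℝ] Z) (A Atil : X ≃ₗ[ℝ] X) :
    (∀ f : X, J (lr (A f)) = 0 ↔
      ∃ w : X, (J (lr (Atil w)) = 0 ∧ Atil w ∈ W) ∧
        f = (f - A.symm (σr (A f))) + A.symm (Atil w)) ∧
    (LinearMap.ker (J ∘ₗ lr ∘ₗ (A : X →ₗ[ℝ] X)) =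
      LinearMap.range (LinearMap.id - ((A.symm : X →ₗ[ℝ] X) ∘ₗ σr ∘ₗ (A : X →ₗ[ℝ] X))) ⊔
        Submodule.map ((A.symm : X →ₗ[ℝ] X) ∘ₗ (Atil : X →ₗ[ℝ] X))
          (LinearMap.ker (J ∘ₗ lr ∘ₗ (Atil : X →ₗ[ℝ] X)) ⊓
            Submodule.comap (Atil : X →ₗ[ℝ] X) W)) ∧
    Disjoint
      (LinearMap.range (LinearMap.id - ((A.symm : X →ₗ[ℝ] X) ∘ₗ σr ∘ₗ (A : X →ₗ[ℝ] X))))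
      (Submodule.map ((A.symm : X →ₗ[ℝ] X) ∘ₗ (Atil : X →ₗ[ℝ] X))
        (LinearMap.ker (J ∘ₗ lr ∘ₗ (Atil : X →ₗ[ℝ] X)) ⊓
          Submodule.comap (Atil : X →ₗ[ℝ] X) W)) ∧
    LinearMap.range (LinearMap.id - ((A.symm : X →ₗ[ℝ] X) ∘ₗ σr ∘ₗ (A : X →ₗ[ℝ] X))) =
      LinearMap.ker (lr ∘ₗ (A : X →ₗ[ℝ] X)) := by
  have hlr : ∀ x : X, lr (σr x) = lr x := by
    intro x
    have h := hσ_ker x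
    rw [LinearMap.mem_ker, map_sub, sub_eq_zero] at h
    exact h.symm
  have hσ0 : ∀ x : X, lr x = 0 → σr x = 0 := by
    intro x hx
    have h1 : σr x ∈ LinearMap.ker lr := by
      rw [LinearMap.mem_ker, hlr]; exact hx
    exact (Submodule.mem_bot ℝ).mp (hW.disjoint.le_bot ⟨h1, hσ_mem x⟩)
  -- part 4
  have part4 : LinearMap.range (LinearMap.id - ((A.symm : X →ₗ[ℝ] X) ∘ₗ σr ∘ₗ (A : X →ₗ[ℝ] X))) =
      LinearMap.ker (lr ∘ₗ (A : X →ₗ[ℝ] X)) := by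
    ext x
    simp only [LinearMap.mem_range, LinearMap.mem_ker, LinearMap.sub_apply, LinearMap.id_apply,
      LinearMap.comp_apply, LinearEquiv.coe_coe]
    constructor
    · rintro ⟨y, rfl⟩
      simp only [map_sub, A.apply_symm_apply]
      rw [hlr, sub_self]
    · intro hx
      refine ⟨x, ?_⟩
      rw [hσ0 _ hx, map_zero, sub_zero]
  -- part 1
  have part1 : ∀ f : X, J (lr (A f)) = 0 ↔
      ∃ w : X, (J (lr (Atil w)) = 0 ∧ Atil w ∈ W) ∧
        f = (f - A.symm (σr (A f))) + A.symm (Atil w) := by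
    intro f
    constructor
    · intro h
      refine ⟨Atil.symm (σr (A f)), ⟨?_, ?_⟩, ?_⟩
      · rw [Atil.apply_symm_apply, hlr]; exact h
      · rw [Atil.apply_symm_apply]; exact hσ_mem _
      · rw [Atil.apply_symm_apply, sub_add_cancel]
    · rintro ⟨w, ⟨hw1, hw2⟩, hf⟩
      have h1 : A.symm (σr (A f)) = A.symm (Atil w) := by
        have h := hf
        rw [sub_add] at h
        exact sub_eq_zero.mp (sub_eq_self.mp h.symm)
      have h2 : σr (A f) = Atil w := A.symm.injective h1
      calc J (lr (A f)) = J (lr (σr (A f))) := by rw [hlr]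
        _ = J (lr (Atil w)) := by rw [h2]
        _ = 0 := hw1
  refine ⟨part1, ?_, ?_, part4⟩
  · -- part 2
    apply le_antisymm
    · intro f hf
      rw [LinearMap.mem_ker, LinearMap.comp_apply, LinearMap.comp_apply,
        LinearEquiv.coe_coe] at hf
      obtain ⟨w, ⟨hw1, hw2⟩, hf2⟩ := (part1 f).mp hf
      refine Submodule.mem_sup.mpr ⟨f - A.symm (σr (A f)), ?_, A.symm (Atil w), ?_, hf2.symm⟩
      · exact ⟨f, rfl⟩
      · exact ⟨w, ⟨by simpa using hw1, by simpa using hw2⟩, rfl⟩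
    · apply sup_le
      · rw [part4]
        intro x hx
        rw [LinearMap.mem_ker, LinearMap.comp_apply] at hx ⊢
        rw [LinearMap.comp_apply, hx, map_zero]
      · rintro x ⟨w, ⟨hw1, hw2⟩, rfl⟩
        simp only [SetLike.mem_coe, LinearMap.mem_ker, LinearMap.comp_apply,
          LinearEquiv.coe_coe] at hw1 ⊢
        rw [A.apply_symm_apply]
        exact hw1
  · -- part 3
    rw [part4, Submodule.disjoint_def]
    rintro x hx ⟨w, ⟨hw1, hw2⟩, rfl⟩
    simp only [SetLike.mem_coe, LinearMap.mem_ker, LinearMap.comp_apply,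
      LinearEquiv.coe_coe, A.apply_symm_apply] at hx
    simp only [SetLike.mem_coe, Submodule.mem_comap, LinearEquiv.coe_coe] at hw2
    have h0 : Atil w = 0 :=
      (Submodule.mem_bot ℝ).mp (hW.disjoint.le_bot ⟨hx, hw2⟩)
    simp [LinearMap.comp_apply, h0]
end

section
/- (Reconstruction.) Let S ⊆ Ã^{-1}(W) and let R: Z → X be a map satisfying R(I_Ã f) = f for all f ∈ S (a left inverse of I_Ã on S). Then D(S) ⊆ A^{-1}(W), and the map D ∘ R: Z → X satisfies (D ∘ R)(I_A f) = f for all f ∈ D(S); that is, D ∘ R is a left inverse of I_A on D(S). -/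
/-- Reconstruction. Abstract setting: `X, F, Z` real vector spaces,
`λr : X → F` linear, `W ⊆ X` a subspace, `J : F → Z` linear, `A, Ã : X → X` linear
bijections, `I_A = J ∘ λr ∘ A`, `D = A⁻¹ ∘ Ã`. If `S ⊆ Ã⁻¹(W)` and `R : Z → X` is a
left inverse of `I_Ã` on `S`, then `D(S) ⊆ A⁻¹(W)` and `D ∘ R` is a left inverse of
`I_A` on `D(S)`. -/
theorem reconstruction
    {X F Z : Type*} [AddCommGroup X] [Module ℝ X] [AddCommGroup F] [Module ℝ F]
    [AddCommGroup Z] [Module ℝ Z]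
    (lr : X →ₗ[ℝ] F) (W : Submodule ℝ X)
    (J : F →ₗ[ℝ] Z) (A Atil : X ≃ₗ[ℝ] X)
    (S : Set X) (hS : ∀ f ∈ S, Atil f ∈ W)
    (R : Z → X) (hR : ∀ f ∈ S, R (J (lr (Atil f))) = f) :
    (∀ f ∈ (fun x => A.symm (Atil x)) '' S, A f ∈ W) ∧
    (∀ f ∈ (fun x => A.symm (Atil x)) '' S,
      A.symm (Atil (R (J (lr (A f))))) = f) := by
  constructor
  · rintro f ⟨x, hx, rfl⟩
    simpa using hS x hx
  · rintro f ⟨x, hx, rfl⟩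
    simp [hR x hx]
end
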